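/- Let m, n, k be positive integers with k ≤ n and let X ∈ M_m ⊗ M_n. Then sup{ |f(X)| : f : M_m ⊗ M_n → ℂ a linear functional with f(I_{mn}) = 1 and f(P) ≥ 0 for every k-block positive P ∈ M_m ⊗ M_n } = sup{ |⟨v, X v⟩| : v a unit vector in ℂ^m ⊗ ℂ^n with SR(v) ≤ k }. (This is Theorem 5.2, characterizing the minimal order norm on M_m(OMIN^k(M_n)).) -/

import Mathlib

open scoped ComplexOrder Kronecker
open Matrix

noncomputable section

/-- The standard inner product `⟨v, w⟩ = ∑ conj(vᵢ) wᵢ` on `I → ℂ`. -/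
def inprod {I : Type*} [Fintype I] (v w : I → ℂ) : ℂ :=
  ∑ i, (starRingEnd ℂ) (v i) * w i

/-- `v` is a unit vector. -/
def UnitVec {I : Type*} [Fintype I] (v : I → ℂ) : Prop :=
  inprod v v = 1

/-- The Schmidt rank of a vector in `ℂ^I ⊗ ℂ^J`, i.e. the rank of the associated
`I × J` coefficient matrix. -/
noncomputable def SchmidtRank {I J : Type*} [Fintype I] [Fintype J] (v : I × J → ℂ) : ℕ :=
  (Matrix.of fun i j => v (i, j)).rank

/-- The operator norm (largest singular value) of a matrix, as
`sup { |⟨v, A w⟩| : v, w unit vectors }`. -/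
noncomputable def opNorm {I J : Type*} [Fintype I] [Fintype J] (A : Matrix I J ℂ) : ℝ :=
  sSup { t : ℝ | ∃ v w, UnitVec v ∧ UnitVec w ∧ t = ‖inprod v (A.mulVec w)‖ }

/-- The `S(k)`-norm of `X ∈ M_I ⊗ M_J`. -/
noncomputable def SNorm {I J : Type*} [Fintype I] [Fintype J] (k : ℕ)
    (X : Matrix (I × J) (I × J) ℂ) : ℝ :=
  sSup { t : ℝ | ∃ v w : I × J → ℂ, UnitVec v ∧ UnitVec w ∧
    SchmidtRank v ≤ k ∧ SchmidtRank w ≤ k ∧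
    t = ‖inprod v (X.mulVec w)‖ }

/-- `X` is a `k`-block positive (Hermitian) operator: `⟨v, X v⟩ ≥ 0` for every
vector of Schmidt rank at most `k`. -/
def kBlockPos {I J : Type*} [Fintype I] [Fintype J] (k : ℕ)
    (X : Matrix (I × J) (I × J) ℂ) : Prop :=
  X.IsHermitian ∧ ∀ v : I × J → ℂ, SchmidtRank v ≤ k → 0 ≤ inprod v (X.mulVec v)

/-- `ρ` has Schmidt number at most `k` (in particular it is positive semidefinite):
it is a finite nonnegative combination of rank-one projections onto vectors of
Schmidt rank at most `k`. -/
def SchmidtNumberLE {I J : Type*} [Fintype I] [Fintype J] (k : ℕ)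
    (ρ : Matrix (I × J) (I × J) ℂ) : Prop :=
  ∃ (N : ℕ) (c : Fin N → ℝ) (v : Fin N → (I × J → ℂ)),
    (∀ i, 0 ≤ c i) ∧ (∀ i, SchmidtRank (v i) ≤ k) ∧
    ρ = ∑ i, (c i : ℂ) • Matrix.vecMulVec (v i) (star (v i))

/-- `id_I ⊗ Φ` : the map applying `Φ` to the second tensor factor. -/
noncomputable def tensorId {I : Type*} [Fintype I] {a b : ℕ}
    (Φ : Matrix (Fin a) (Fin a) ℂ →ₗ[ℂ] Matrix (Fin b) (Fin b) ℂ)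
    (X : Matrix (I × Fin a) (I × Fin a) ℂ) : Matrix (I × Fin b) (I × Fin b) ℂ :=
  Matrix.of fun p q => Φ (Matrix.of fun s t => X (p.1, s) (q.1, t)) p.2 q.2

/-- The trace norm `‖X‖_tr = Tr √(X^* X)`. -/
noncomputable def trNorm {I : Type*} [Fintype I] [DecidableEq I] (X : Matrix I I ℂ) : ℝ :=
  (((Matrix.posSemidef_conjTranspose_mul_self X).1.eigenvectorUnitary : Matrix I I ℂ) *
    Matrix.diagonal (fun i => ((√((Matrix.posSemidef_conjTranspose_mul_self X).1.eigenvalues i) : ℝ) : ℂ)) *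
    (star (Matrix.posSemidef_conjTranspose_mul_self X).1.eigenvectorUnitary : Matrix I I ℂ)).trace.re

end

/-!
Vector states `A ↦ ⟨v, A v⟩` with `SR(v) ≤ k` are positive on `k`-block positive matrices, so the
right-hand set is contained in the left-hand one. Conversely, suppose `|⟨v, X v⟩| ≤ S ‖v‖²` whenever
`SR(v) ≤ k`, and let `f` be such a functional. Choose `|u| = 1` with `u f(X) = |f(X)|` and write
`uX = ℜ(uX) + i ℑ(uX)`. The Hermitian matrices `S·1 - ℜ(uX)` and `S·1 - ℑ(uX)` are `k`-block
positive, so `f(ℑ(uX))` is real and `Re f(ℜ(uX)) ≤ S`; hence `|f(X)| = Re f(ℜ(uX)) ≤ S`.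
The two sets therefore have the same upper bounds, and so the same supremum.
-/

open ComplexStarModule

theorem Real.sSup_eq_of_upperBounds_eq {s t : Set ℝ} (h : upperBounds s = upperBounds t) :
    sSup s = sSup t := by
  have of_isLUB : ∀ {s t : Set ℝ}, upperBounds s = upperBounds t → s.Nonempty → BddAbove s →
      sSup s = sSup t := by
    intro s t h hne hbdd
    have hlub : IsLUB t (sSup s) := (isLUB_congr h).1 (isLUB_csSup hne hbdd)
    obtain rfl | htne := t.eq_empty_or_nonempty
    · exact absurd (isLUB_empty_iff.1 hlub) (not_isBot _)
    · exact (hlub.csSup_eq htne).symm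
  by_cases hs : s.Nonempty ∧ BddAbove s
  · exact of_isLUB h hs.1 hs.2
  by_cases ht : t.Nonempty ∧ BddAbove t
  · exact (of_isLUB h.symm ht.1 ht.2).symm
  rw [Real.sSup_def, Real.sSup_def, dif_neg hs, dif_neg ht]

section inprod
variable {I : Type*} [Fintype I]

lemma inprod_add_right (v w₁ w₂ : I → ℂ) : inprod v (w₁ + w₂) = inprod v w₁ + inprod v w₂ := by
  simp [inprod, mul_add, Finset.sum_add_distrib]

lemma inprod_sub_right (v w₁ w₂ : I → ℂ) : inprod v (w₁ - w₂) = inprod v w₁ - inprod v w₂ := by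
  simp [inprod, mul_sub, Finset.sum_sub_distrib]

lemma inprod_smul_right (c : ℂ) (v w : I → ℂ) : inprod v (c • w) = c * inprod v w := by
  simp [inprod, Finset.mul_sum, mul_left_comm]

lemma inprod_smul_left (c : ℂ) (v w : I → ℂ) :
    inprod (c • v) w = (starRingEnd ℂ) c * inprod v w := by
  simp [inprod, Finset.mul_sum, mul_assoc]

lemma inprod_self (v : I → ℂ) : inprod v v = ((∑ i, Complex.normSq (v i) : ℝ) : ℂ) := by
  simp [inprod, Complex.normSq_eq_conj_mul_self]

lemma inprod_self_re_pos {v : I → ℂ} (hv : v ≠ 0) : 0 < (inprod v v).re := by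
  obtain ⟨i, hi⟩ := Function.ne_iff.mp hv
  rw [inprod_self, Complex.ofReal_re]
  exact Finset.sum_pos' (fun i _ => Complex.normSq_nonneg _)
    ⟨i, Finset.mem_univ i, Complex.normSq_pos.mpr hi⟩

lemma inprod_mulVec_star (A : Matrix I I ℂ) (v : I → ℂ) :
    inprod v ((star A) *ᵥ v) = (starRingEnd ℂ) (inprod v (A *ᵥ v)) := by
  simp only [inprod, Matrix.mulVec, dotProduct, Matrix.star_apply, Finset.mul_sum, map_sum,
    map_mul, Complex.conj_conj, Complex.star_def]
  rw [Finset.sum_comm]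
  exact Finset.sum_congr rfl fun i _ => Finset.sum_congr rfl fun j _ => by ring

lemma inprod_realPart_mulVec (A : Matrix I I ℂ) (v : I → ℂ) :
    inprod v ((ℜ A : Matrix I I ℂ) *ᵥ v) = ((inprod v (A *ᵥ v)).re : ℂ) := by
  rw [realPart_apply_coe, ← Complex.coe_smul, Matrix.smul_mulVec, Matrix.add_mulVec,
    inprod_smul_right, inprod_add_right, inprod_mulVec_star, Complex.add_conj]
  push_cast
  ring

end inprod

lemma schmidtRank_smul {I J : Type*} [Fintype I] [Fintype J] {c : ℂ} (hc : c ≠ 0)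
    (v : I × J → ℂ) : SchmidtRank (c • v) = SchmidtRank v :=
  Matrix.rank_smul_of_mem_nonZeroDivisors (Matrix.of fun i j => v (i, j))
    (mem_nonZeroDivisors_of_ne_zero hc)

lemma norm_inprod_mulVec_le_of_unitVec {I J : Type*} [Fintype I] [Fintype J] {k : ℕ}
    {A : Matrix (I × J) (I × J) ℂ} {S : ℝ}
    (hS : ∀ v, UnitVec v → SchmidtRank v ≤ k → ‖inprod v (A *ᵥ v)‖ ≤ S)
    {v : I × J → ℂ} (hv : SchmidtRank v ≤ k) :
    ‖inprod v (A *ᵥ v)‖ ≤ S * (inprod v v).re := by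
  obtain rfl | hv0 := eq_or_ne v 0
  · simp [inprod]
  set t := (inprod v v).re
  have ht : 0 < t := inprod_self_re_pos hv0
  have hvv : inprod v v = t := by simp [t, inprod_self]
  set c : ℂ := (((√t)⁻¹ : ℝ) : ℂ)
  have hscale : ∀ w, inprod (c • v) (c • w) = (t⁻¹ : ℝ) * inprod v w := by
    intro w
    rw [inprod_smul_left, inprod_smul_right, ← mul_assoc, Complex.conj_ofReal,
      ← Complex.ofReal_mul, ← mul_inv, Real.mul_self_sqrt ht.le]
  have hunit : UnitVec (c • v) := by
    rw [UnitVec, hscale, hvv, ← Complex.ofReal_mul, inv_mul_cancel₀ ht.ne', Complex.ofReal_one]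
  have hc : c ≠ 0 := by simp [c, (Real.sqrt_pos.2 ht).ne']
  have h := hS (c • v) hunit (by rwa [schmidtRank_smul hc])
  rw [Matrix.mulVec_smul, hscale, norm_mul, Complex.norm_real,
    Real.norm_of_nonneg (by positivity), inv_mul_le_iff₀ ht] at h
  linarith

def vectorState {I : Type*} [Fintype I] (v : I → ℂ) : Matrix I I ℂ →ₗ[ℂ] ℂ where
  toFun A := inprod v (A *ᵥ v)
  map_add' A B := by simp only [Matrix.add_mulVec, inprod_add_right]
  map_smul' c A := by
    simp only [Matrix.smul_mulVec, inprod_smul_right, RingHom.id_apply, smul_eq_mul]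

lemma vectorState_one {I : Type*} [Fintype I] [DecidableEq I] {v : I → ℂ} (hv : UnitVec v) :
    vectorState v 1 = 1 := by
  rw [vectorState, LinearMap.coe_mk, AddHom.coe_mk, Matrix.one_mulVec]
  exact hv

section kBlockPos
variable {I J : Type*} [Fintype I] [Fintype J] [DecidableEq I] [DecidableEq J] {k : ℕ}
  {A : Matrix (I × J) (I × J) ℂ} {S : ℝ}

lemma kBlockPos_smul_one_sub_realPart
    (hA : ∀ v, SchmidtRank v ≤ k → ‖inprod v (A *ᵥ v)‖ ≤ S * (inprod v v).re) :
    kBlockPos k ((S : ℂ) • 1 - (ℜ A : Matrix (I × J) (I × J) ℂ)) := by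
  refine ⟨?_, fun v hv => ?_⟩
  · exact (Matrix.isHermitian_one.smul (Complex.conj_ofReal S)).sub (ℜ A).2
  · have hvv : inprod v v = (inprod v v).re := by simp [inprod_self]
    rw [Matrix.sub_mulVec, inprod_sub_right, Matrix.smul_mulVec, Matrix.one_mulVec,
      inprod_smul_right, inprod_realPart_mulVec, hvv]
    norm_cast
    rw [sub_nonneg]
    exact (Complex.re_le_norm _).trans (hA v hv)

lemma re_apply_realPart_le (f : Matrix (I × J) (I × J) ℂ →ₗ[ℂ] ℂ) (hf1 : f 1 = 1)
    (hfpos : ∀ P, kBlockPos k P → 0 ≤ f P)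
    (hA : ∀ v, SchmidtRank v ≤ k → ‖inprod v (A *ᵥ v)‖ ≤ S * (inprod v v).re) :
    (f (ℜ A)).re ≤ S ∧ (f (ℜ A)).im = 0 := by
  have h := hfpos _ (kBlockPos_smul_one_sub_realPart hA)
  rw [map_sub, map_smul, hf1, smul_eq_mul, mul_one, Complex.le_def] at h
  simp only [Complex.zero_re, Complex.sub_re, Complex.ofReal_re, Complex.zero_im,
    Complex.sub_im, Complex.ofReal_im] at h
  constructor <;> linarith

lemma norm_apply_le_of_norm_inprod_mulVec_le (f : Matrix (I × J) (I × J) ℂ →ₗ[ℂ] ℂ)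
    (hf1 : f 1 = 1) (hfpos : ∀ P, kBlockPos k P → 0 ≤ f P)
    (hA : ∀ v, SchmidtRank v ≤ k → ‖inprod v (A *ᵥ v)‖ ≤ S * (inprod v v).re) :
    ‖f A‖ ≤ S := by
  have hrot : ∀ c : ℂ, ‖c‖ = 1 → ∀ v, SchmidtRank v ≤ k →
      ‖inprod v ((c • A) *ᵥ v)‖ ≤ S * (inprod v v).re := by
    intro c hc v hv
    rw [Matrix.smul_mulVec, inprod_smul_right, norm_mul, hc, one_mul]
    exact hA v hv
  set u := Complex.exp (↑(-(f A).arg) * Complex.I)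
  have hu : ‖u‖ = 1 := Complex.norm_exp_ofReal_mul_I _
  have hfu : f (u • A) = ‖f A‖ := by
    conv_lhs => rw [map_smul, smul_eq_mul, ← Complex.norm_mul_exp_arg_mul_I (f A)]
    rw [mul_left_comm, ← Complex.exp_add]
    push_cast
    simp
  have hre := re_apply_realPart_le f hf1 hfpos (hrot u hu)
  have him := re_apply_realPart_le f hf1 hfpos (hrot (-Complex.I * u) (by simp [hu]))
  rw [← smul_smul, neg_smul, map_neg, realPart_I_smul, neg_neg] at him
  calc ‖f A‖ = (f (u • A)).re := by simp [hfu]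
    _ = (f (ℜ (u • A))).re - (f (ℑ (u • A))).im := by
      conv_lhs => rw [← realPart_add_I_smul_imaginaryPart (u • A)]
      simp [sub_eq_add_neg]
    _ ≤ S := by linarith [hre.1, him.2]

end kBlockPos

theorem kSuperMinimal_minimal_order_norm_general (m n k : ℕ)
    (X : Matrix (Fin m × Fin n) (Fin m × Fin n) ℂ) :
    sSup { t : ℝ | ∃ f : Matrix (Fin m × Fin n) (Fin m × Fin n) ℂ →ₗ[ℂ] ℂ,
        f 1 = 1 ∧ (∀ P, kBlockPos k P → 0 ≤ f P) ∧ t = ‖f X‖ } =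
      sSup { t : ℝ | ∃ v : Fin m × Fin n → ℂ, UnitVec v ∧ SchmidtRank v ≤ k ∧
        t = ‖inprod v (X.mulVec v)‖ } := by
  refine Real.sSup_eq_of_upperBounds_eq (Set.ext fun S => ⟨fun hS => ?_, fun hS => ?_⟩)
  · rintro t ⟨v, hv, hvk, rfl⟩
    exact hS ⟨vectorState v, vectorState_one hv, fun P hP => hP.2 v hvk, rfl⟩
  · rintro t ⟨f, hf1, hfpos, rfl⟩
    exact norm_apply_le_of_norm_inprod_mulVec_le f hf1 hfpos
      fun v hv => norm_inprod_mulVec_le_of_unitVec (fun w hw hwk => hS ⟨w, hw, hwk, rfl⟩) hv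

/-- Theorem 5.2: the minimal order norm on `M_m(OMIN^k(M_n))`. -/
theorem kSuperMinimal_minimal_order_norm (m n k : ℕ) (hm : 0 < m) (hn : 0 < n)
    (hk : 0 < k) (hkn : k ≤ n)
    (X : Matrix (Fin m × Fin n) (Fin m × Fin n) ℂ) :
    sSup { t : ℝ | ∃ f : Matrix (Fin m × Fin n) (Fin m × Fin n) ℂ →ₗ[ℂ] ℂ,
        f 1 = 1 ∧ (∀ P, kBlockPos k P → 0 ≤ f P) ∧ t = ‖f X‖ } =
      sSup { t : ℝ | ∃ v : Fin m × Fin n → ℂ, UnitVec v ∧ SchmidtRank v ≤ k ∧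
        t = ‖inprod v (X.mulVec v)‖ } :=
  kSuperMinimal_minimal_order_norm_general m n k X
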